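/- arXiv:2602.05622 — 4 statements merged into one kernel-verified Lean document; each statement's English description precedes it below -/
import Mathlib

section
/- Let (Ω, P) be a probability space, let M : Ω → ℕ be a measurable random variable taking values in {1, 2, …}, and for each integer m ≥ 1 let D_m : Ω → ℝ be integrable. Set q_m := P(M ≥ m) and assume q_m > 0 for all m ≥ 1, that for each m the event {M ≥ m} is independent of D_m, and that ∑_{m=1}^∞ E[|D_m|] < ∞. Then the random variable ω ↦ ∑_{m=1}^{M(ω)} D_m(ω)/q_m is integrable and its expectation equals ∑_{m=1}^∞ E[D_m] (this series being absolutely convergent). -/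
open MeasureTheory ProbabilityTheory

/-!
Write `Aₘ = {M ≥ m}` and `Fₘ = 1_{Aₘ} Dₘ / qₘ`, so that `S = ∑ₘ Fₘ` pointwise (a finite sum at each
`ω`). Independence of `Aₘ` and `Dₘ` gives `E[Fₘ] = E[Dₘ]` and `E[|Fₘ|] = E[|Dₘ|]`, so the series
`∑ₘ Fₘ` converges absolutely in `L¹`; its sum `S` is therefore integrable and the expectation can be
taken term by term.
-/

namespace MeasureTheory

variable {α E : Type*} [MeasurableSpace α] {μ : Measure α} [NormedAddCommGroup E] [CompleteSpace E]

theorem integrable_tsum_of_summable_integral_norm {ι : Type*} [Countable ι] {F : ι → α → E}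
    (hF_int : ∀ i, Integrable (F i) μ) (hF_sum : Summable fun i ↦ ∫ a, ‖F i a‖ ∂μ) :
    Integrable (fun a ↦ ∑' i, F i a) μ := by
  let f i : α →₁[μ] E := (hF_int i).toL1 (F i)
  have hf_sum : ∑' i, ‖f i‖ₑ ≠ ⊤ := by
    simp_rw [f, Integrable.enorm_toL1, ← ofReal_integral_norm_eq_lintegral_enorm (hF_int _),
      ← ENNReal.ofReal_tsum_of_nonneg (fun i ↦ integral_nonneg fun a ↦ norm_nonneg _) hF_sum]
    exact ENNReal.ofReal_ne_top
  refine (L1.integrable_coeFn (∑' i, f i)).congr ?_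
  filter_upwards [Lp.coeFn_tsum hf_sum, ae_all_iff.2 fun i ↦ (hF_int i).coeFn_toL1]
    with a hsum hF
  rw [hsum]
  exact tsum_congr hF

end MeasureTheory

namespace ProbabilityTheory

variable {Ω : Type*} [MeasurableSpace Ω] {P : Measure Ω} {A : Set Ω} {X : Ω → ℝ}

theorem IndepFun.integral_indicator_eq_measureReal_mul (hA : MeasurableSet A)
    (hAX : IndepFun (A.indicator fun _ ↦ (1 : ℝ)) X P) (hX : AEStronglyMeasurable X P) :
    ∫ ω, A.indicator X ω ∂P = P.real A * ∫ ω, X ω ∂P := calc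
  _ = ∫ ω, A.indicator (fun _ ↦ (1 : ℝ)) ω * X ω ∂P := by
    simp_rw [← Set.indicator_mul_left, one_mul]
  _ = P.real A * ∫ ω, X ω ∂P := by
    rw [hAX.integral_fun_mul_eq_mul_integral (aestronglyMeasurable_const.indicator hA) hX,
      ← integral_indicator_one hA]
    rfl

theorem IndepFun.integral_indicator_div_measureReal (hA : MeasurableSet A)
    (hAX : IndepFun (A.indicator fun _ ↦ (1 : ℝ)) X P) (hX : AEStronglyMeasurable X P)
    (hPA : P.real A ≠ 0) :
    ∫ ω, A.indicator (fun ω ↦ X ω / P.real A) ω ∂P = ∫ ω, X ω ∂P := by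
  have hAX' : IndepFun (A.indicator fun _ ↦ (1 : ℝ)) (fun ω ↦ X ω / P.real A) P :=
    hAX.comp measurable_id (measurable_div_const _)
  rw [hAX'.integral_indicator_eq_measureReal_mul hA (by fun_prop), integral_div,
    mul_div_cancel₀ _ hPA]

end ProbabilityTheory

theorem Finset.sum_Icc_one_eq_tsum_ite {M : Type*} [AddCommMonoid M] [TopologicalSpace M]
    (g : ℕ → M) (n : ℕ) :
    ∑ m ∈ Finset.Icc 1 n, g m = ∑' m, if m + 1 ≤ n then g (m + 1) else 0 := by
  rw [tsum_eq_sum (s := Finset.range n) fun m hm ↦ if_neg (by simpa using hm),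
    Finset.sum_ite_of_true (p := (· + 1 ≤ n)) fun m hm ↦ Finset.mem_range.1 hm,
    Finset.range_eq_Ico, Finset.sum_Ico_add', ← Finset.Ico_add_one_right_eq_Icc]

theorem russian_roulette_unbiased_general
    {Ω : Type*} [MeasurableSpace Ω] (P : Measure Ω)
    (M : Ω → ℕ) (hM : Measurable M)
    (D : ℕ → Ω → ℝ) (hD : ∀ m, 1 ≤ m → Integrable (D m) P)
    (q : ℕ → ℝ) (hq : ∀ m, q m = (P {ω | m ≤ M ω}).toReal)
    (hqpos : ∀ m, 1 ≤ m → 0 < q m)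
    (hindep : ∀ m, 1 ≤ m →
      IndepFun (Set.indicator {ω | m ≤ M ω} (fun _ => (1 : ℝ))) (D m) P)
    (habs : Summable (fun m : ℕ => ∫ ω, |D (m + 1) ω| ∂P))
    (S : Ω → ℝ) (hS : ∀ ω, S ω = ∑ m ∈ Finset.Icc 1 (M ω), D m ω / q m) :
    Integrable S P ∧
      HasSum (fun m : ℕ => ∫ ω, D (m + 1) ω ∂P) (∫ ω, S ω ∂P) := by
  have hm m : 1 ≤ m + 1 := Nat.le_add_left 1 m
  have hA m : MeasurableSet {ω | m ≤ M ω} := hM measurableSet_Ici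
  have hq' m : q m = P.real {ω | m ≤ M ω} := hq m
  have hq0 m : P.real {ω | m + 1 ≤ M ω} ≠ 0 := hq' (m + 1) ▸ (hqpos _ (hm m)).ne'
  let F m : Ω → ℝ := {ω | m + 1 ≤ M ω}.indicator fun ω ↦ D (m + 1) ω / q (m + 1)
  have hF_int m : Integrable (F m) P := ((hD _ (hm m)).div_const _).indicator (hA _)
  have hF_integral m : ∫ ω, F m ω ∂P = ∫ ω, D (m + 1) ω ∂P := by
    simp only [F, hq']
    exact (hindep _ (hm m)).integral_indicator_div_measureReal (hA _)
      (hD _ (hm m)).1 (hq0 m)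
  have hF_norm m : ∫ ω, ‖F m ω‖ ∂P = ∫ ω, |D (m + 1) ω| ∂P := by
    have hindep_abs : IndepFun _ (fun ω ↦ |D (m + 1) ω|) P :=
      (hindep _ (hm m)).comp measurable_id measurable_abs
    simp only [F, norm_indicator_eq_indicator_norm, Real.norm_eq_abs, abs_div,
      abs_of_pos (hqpos _ (hm m))]
    simp only [hq']
    exact hindep_abs.integral_indicator_div_measureReal (hA _) (hD _ (hm m)).abs.1 (hq0 m)
  have hS_eq : S = fun ω ↦ ∑' m, F m ω := by
    ext ω
    simp only [hS, F, Set.indicator_apply, Set.mem_ofPred_eq]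
    exact Finset.sum_Icc_one_eq_tsum_ite _ _
  have hF_sum : Summable fun m ↦ ∫ ω, ‖F m ω‖ ∂P := by simpa only [hF_norm] using habs
  rw [hS_eq]
  refine ⟨integrable_tsum_of_summable_integral_norm hF_int hF_sum, ?_⟩
  simpa only [hF_integral] using hasSum_integral_of_summable_integral_norm hF_int hF_sum

/-- **Unbiasedness of the Russian-roulette truncated estimator.** Let `M : Ω → ℕ` be a
measurable random variable with values in `{1,2,…}` and, for each `m ≥ 1`, let `D m` be an
integrable real random variable. Set `q m := P(M ≥ m)` and assume `q m > 0`, that the event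
`{M ≥ m}` is independent of `D m` (in the sense that the indicator of the event and `D m` are
independent random variables), and `∑_{m≥1} E[|D m|] < ∞`. Then
`ω ↦ ∑_{m=1}^{M ω} D m ω / q m` is integrable and its expectation equals `∑_{m≥1} E[D m]`,
this series being (absolutely) convergent. -/
theorem russian_roulette_unbiased
    {Ω : Type*} [MeasurableSpace Ω] (P : Measure Ω) [IsProbabilityMeasure P]
    (M : Ω → ℕ) (hM : Measurable M) (hM1 : ∀ ω, 1 ≤ M ω)
    (D : ℕ → Ω → ℝ) (hD : ∀ m, 1 ≤ m → Integrable (D m) P)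
    (q : ℕ → ℝ) (hq : ∀ m, q m = (P {ω | m ≤ M ω}).toReal)
    (hqpos : ∀ m, 1 ≤ m → 0 < q m)
    (hindep : ∀ m, 1 ≤ m →
      IndepFun (Set.indicator {ω | m ≤ M ω} (fun _ => (1 : ℝ))) (D m) P)
    (habs : Summable (fun m : ℕ => ∫ ω, |D (m + 1) ω| ∂P))
    (S : Ω → ℝ) (hS : ∀ ω, S ω = ∑ m ∈ Finset.Icc 1 (M ω), D m ω / q m) :
    Integrable S P ∧
      HasSum (fun m : ℕ => ∫ ω, D (m + 1) ω ∂P) (∫ ω, S ω ∂P) :=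
  russian_roulette_unbiased_general P M hM D hD q hq hqpos hindep habs S hS
end

section
/- Let (Ω, P) be a probability space, let (X_k)_{k≥1} be a mutually independent family of square-integrable real random variables, and let M : Ω → ℕ take values in {1, 2, …} and be independent of the σ-algebra generated by the whole family (X_k)_{k≥1}. Set q_k := P(M ≥ k) and assume ∑_{k=1}^∞ q_k E[X_k²] < ∞ and ∑_{k=1}^∞ √(q_k) |E[X_k]| < ∞. Then the random variable S(ω) := ∑_{k=1}^{M(ω)} X_k(ω) is square-integrable and satisfies Var(S) ≤ ∑_{k=1}^∞ q_k E[X_k²] + (∑_{k=1}^∞ √(q_k) |E[X_k]|)². -/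
/-!
Truncate: `S_N = ∑_{k<N} 1{k < M} X_k` equals `S` as soon as `N ≥ M`. Since `M` is independent of
the `X`'s and `1{j < M} 1{k < M} = 1{max j k < M}`, `E[S_N²] = ∑_{j,k<N} q_{max j k} E[X_j X_k]`.
Off the diagonal this is `q_{max j k} E[X_j] E[X_k] ≤ √q_j √q_k |E[X_j]| |E[X_k]|` because `q` is
decreasing, so `E[S_N²] ≤ ∑ q_k E[X_k²] + (∑ √q_k |E[X_k]|)²` uniformly in `N`. Fatou's lemma
carries the bound over to `E[S²]`, which dominates `Var(S)`.
-/

open MeasureTheory ProbabilityTheory Filter Topology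

theorem memLp_two_and_integral_sq_le_of_tendsto {α : Type*} [MeasurableSpace α] {μ : Measure α}
    {f : ℕ → α → ℝ} {g : α → ℝ} {C : ℝ} (hf : ∀ n, MemLp (f n) 2 μ)
    (hC : ∀ n, ∫ a, f n a ^ 2 ∂μ ≤ C)
    (hlim : ∀ᵐ a ∂μ, Tendsto (fun n => f n a) atTop (𝓝 (g a))) :
    MemLp g 2 μ ∧ ∫ a, g a ^ 2 ∂μ ≤ C := by
  have hg : AEStronglyMeasurable g μ :=
    aestronglyMeasurable_of_tendsto_ae atTop (fun n => (hf n).1) hlim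
  have hC0 : 0 ≤ C := (integral_nonneg fun a => sq_nonneg _).trans (hC 0)
  have sq_nonneg_ae : ∀ h : α → ℝ, 0 ≤ᵐ[μ] fun a => h a ^ 2 := fun h =>
    ae_of_all _ fun a => sq_nonneg (h a)
  have fatou : ∫⁻ a, ENNReal.ofReal (g a ^ 2) ∂μ ≤ ENNReal.ofReal C := calc
    _ = ∫⁻ a, liminf (fun n => ENNReal.ofReal (f n a ^ 2)) atTop ∂μ := by
        refine lintegral_congr_ae (hlim.mono fun a ha => ?_)
        have hcont : Continuous fun x : ℝ => ENNReal.ofReal (x ^ 2) :=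
          ENNReal.continuous_ofReal.comp (continuous_pow 2)
        exact ((hcont.tendsto _).comp ha).liminf_eq.symm
    _ ≤ liminf (fun n => ∫⁻ a, ENNReal.ofReal (f n a ^ 2) ∂μ) atTop :=
        lintegral_liminf_le' fun n => ((hf n).1.aemeasurable.pow_const 2).ennreal_ofReal
    _ ≤ ENNReal.ofReal C := by
        refine (liminf_le_liminf (Eventually.of_forall fun n => ?_)).trans (liminf_const _).le
        rw [← ofReal_integral_eq_lintegral_ofReal (hf n).integrable_sq (sq_nonneg_ae _)]
        exact ENNReal.ofReal_le_ofReal (hC n)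
  have hint : Integrable (fun a => g a ^ 2) μ :=
    ⟨hg.pow 2, (hasFiniteIntegral_iff_ofReal (sq_nonneg_ae g)).2
      (fatou.trans_lt ENNReal.ofReal_lt_top)⟩
  refine ⟨(memLp_two_iff_integrable_sq hg).2 hint, ?_⟩
  rwa [← ENNReal.ofReal_le_ofReal_iff hC0,
    ofReal_integral_eq_lintegral_ofReal hint (sq_nonneg_ae g)]

namespace ProbabilityTheory

theorem Indep.integral_indicator_eq_mul {Ω : Type*} {m mΩ : MeasurableSpace Ω} {P : Measure Ω}
    {f : Ω → ℝ} {A : Set Ω} (hm : m ≤ mΩ)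
    (hind : Indep m (MeasurableSpace.comap f inferInstance) P) (hf : AEMeasurable f P)
    (hA : MeasurableSet[m] A) :
    ∫ ω, A.indicator f ω ∂P = P.real A * ∫ ω, f ω ∂P := by
  rw [integral_indicator (hm A hA)]
  exact hind.setIntegral_eq_mul (f := id) hm hf hA aestronglyMeasurable_id

end ProbabilityTheory

theorem Antitone.apply_max_le_sqrt_mul_sqrt {q : ℕ → ℝ} (hq : Antitone q) (hq0 : ∀ k, 0 ≤ q k)
    (j k : ℕ) : q (max j k) ≤ √(q j) * √(q k) := calc
  q (max j k) = √(q (max j k)) * √(q (max j k)) := (Real.mul_self_sqrt (hq0 _)).symm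
  _ ≤ √(q j) * √(q k) := by
      gcongr
      exacts [hq (le_max_left j k), hq (le_max_right j k)]

theorem Antitone.apply_max_mul_le {q : ℕ → ℝ} (hq : Antitone q) (hq0 : ∀ k, 0 ≤ q k)
    {c : ℕ → ℕ → ℝ} {m : ℕ → ℝ} (hc : ∀ j k, j ≠ k → c j k = m j * m k) (j k : ℕ) :
    q (max j k) * c j k ≤
      (if j = k then q k * c k k else 0) + √(q j) * |m j| * (√(q k) * |m k|) := by
  rcases eq_or_ne j k with rfl | hjk
  · rw [max_self, if_pos rfl]
    exact le_add_of_nonneg_right (mul_self_nonneg _)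
  · rw [if_neg hjk, zero_add, hc j k hjk]
    calc q (max j k) * (m j * m k) ≤ q (max j k) * (|m j| * |m k|) :=
          mul_le_mul_of_nonneg_left ((le_abs_self _).trans_eq (abs_mul _ _)) (hq0 _)
      _ ≤ √(q j) * √(q k) * (|m j| * |m k|) := by
          gcongr
          exact hq.apply_max_le_sqrt_mul_sqrt hq0 j k
      _ = √(q j) * |m j| * (√(q k) * |m k|) := by ring

theorem Finset.sum_sum_le_sum_add_sq_sum {ι : Type*} [DecidableEq ι] (s : Finset ι)
    {c : ι → ι → ℝ} {a b : ι → ℝ} (hc : ∀ j k, c j k ≤ (if j = k then a k else 0) + b j * b k) :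
    ∑ j ∈ s, ∑ k ∈ s, c j k ≤ ∑ k ∈ s, a k + (∑ k ∈ s, b k) ^ 2 := calc
  _ ≤ ∑ j ∈ s, ∑ k ∈ s, ((if j = k then a k else 0) + b j * b k) := by
      gcongr with j _ k _
      exact hc j k
  _ = ∑ k ∈ s, a k + (∑ k ∈ s, b k) ^ 2 := by
      simp only [Finset.sum_add_distrib, Finset.sum_ite_eq, ← Finset.sum_mul_sum, sq]
      rw [Finset.sum_congr rfl fun j hj => if_pos hj]

section RussianRoulette

variable {Ω : Type*} {X : ℕ → Ω → ℝ} {M : Ω → ℕ}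

noncomputable def truncatedRouletteSum (M : Ω → ℕ) (X : ℕ → Ω → ℝ) (N : ℕ) (ω : Ω) : ℝ :=
  ∑ k ∈ Finset.range N, {ω | k < M ω}.indicator (X k) ω

theorem truncatedRouletteSum_of_le {N : ℕ} {ω : Ω} (h : M ω ≤ N) :
    truncatedRouletteSum M X N ω = ∑ k ∈ Finset.range (M ω), X k ω := by
  simp only [truncatedRouletteSum, Set.indicator_apply, Set.mem_ofPred_eq]
  rw [← Finset.sum_filter]
  congr 1
  ext k
  simp only [Finset.mem_filter, Finset.mem_range]
  omega

variable [MeasurableSpace Ω] {P : Measure Ω}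

theorem memLp_truncatedRouletteSum (hM : Measurable M) (hX : ∀ k, MemLp (X k) 2 P) (N : ℕ) :
    MemLp (truncatedRouletteSum M X N) 2 P :=
  memLp_finsetSum _ fun k _ => (hX k).indicator (measurableSet_lt measurable_const hM)

theorem integral_truncatedRouletteSum_sq (hM : Measurable M) (hX : ∀ k, MemLp (X k) 2 P)
    (hMX : Indep (MeasurableSpace.comap M inferInstance)
      (⨆ k, MeasurableSpace.comap (X k) inferInstance) P) (N : ℕ) :
    ∫ ω, truncatedRouletteSum M X N ω ^ 2 ∂P =
      ∑ j ∈ Finset.range N, ∑ k ∈ Finset.range N,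
        P.real {ω | max j k < M ω} * ∫ ω, X j ω * X k ω ∂P := by
  have hsq : ∀ ω, truncatedRouletteSum M X N ω ^ 2 = ∑ j ∈ Finset.range N, ∑ k ∈ Finset.range N,
      {ω | max j k < M ω}.indicator (fun ω => X j ω * X k ω) ω := fun ω => by
    simp only [truncatedRouletteSum, sq, Finset.sum_mul_sum, max_lt_iff, Set.ofPred_and,
      Set.inter_indicator_mul]
  have hint : ∀ j k, Integrable (fun ω => X j ω * X k ω) P := fun j k =>
    (hX j).integrable_mul (hX k)
  simp_rw [hsq]
  rw [integral_finsetSum _ fun j _ => integrable_finsetSum _ fun k _ =>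
    (hint j k).indicator (measurableSet_lt measurable_const hM)]
  refine Finset.sum_congr rfl fun j _ => ?_
  rw [integral_finsetSum _ fun k _ => (hint j k).indicator (measurableSet_lt measurable_const hM)]
  refine Finset.sum_congr rfl fun k _ => ?_
  have hXi : ∀ i, Measurable[⨆ i, MeasurableSpace.comap (X i) inferInstance] (X i) := fun i =>
    Measurable.of_comap_le (le_iSup (fun i => MeasurableSpace.comap (X i) inferInstance) i)
  have hXX := (hXi j).mul (hXi k)
  exact (indep_of_indep_of_le_right hMX hXX.comap_le).integral_indicator_eq_mul hM.comap_le
    (hint j k).aemeasurable ⟨Set.Ioi (max j k), measurableSet_Ioi, rfl⟩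

theorem integral_truncatedRouletteSum_sq_le [IsFiniteMeasure P] (hM : Measurable M)
    (hX : ∀ k, MemLp (X k) 2 P) (hXX : ∀ j k, j ≠ k → IndepFun (X j) (X k) P)
    (hMX : Indep (MeasurableSpace.comap M inferInstance)
      (⨆ k, MeasurableSpace.comap (X k) inferInstance) P) (N : ℕ) :
    ∫ ω, truncatedRouletteSum M X N ω ^ 2 ∂P ≤
      ∑ k ∈ Finset.range N, P.real {ω | k < M ω} * ∫ ω, X k ω ^ 2 ∂P +
        (∑ k ∈ Finset.range N, √(P.real {ω | k < M ω}) * |∫ ω, X k ω ∂P|) ^ 2 := by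
  have hq : Antitone fun k => P.real {ω | k < M ω} := fun j k hjk =>
    measureReal_mono fun ω (h : k < M ω) => hjk.trans_lt h
  have hmean : ∀ j k, j ≠ k → ∫ ω, X j ω * X k ω ∂P = (∫ ω, X j ω ∂P) * ∫ ω, X k ω ∂P :=
    fun j k hjk => (hXX j k hjk).integral_fun_mul_eq_mul_integral (hX j).1 (hX k).1
  rw [integral_truncatedRouletteSum_sq hM hX hMX]
  simp only [sq (X _ _)]
  exact Finset.sum_sum_le_sum_add_sq_sum _
    (hq.apply_max_mul_le (fun k => measureReal_nonneg) hmean)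

end RussianRoulette

theorem russian_roulette_second_moment_general
    {Ω : Type*} [MeasurableSpace Ω] (P : Measure Ω) [IsProbabilityMeasure P]
    (X : ℕ → Ω → ℝ) (hX2 : ∀ k, MemLp (X k) 2 P)
    (hXindep : iIndepFun X P)
    (M : Ω → ℕ) (hM : Measurable M)
    (hMindep :
      Indep (MeasurableSpace.comap M inferInstance)
        (⨆ k, MeasurableSpace.comap (X k) inferInstance) P)
    (q : ℕ → ℝ) (hq : ∀ k, q k = (P {ω | k + 1 ≤ M ω}).toReal)
    (hS2 : Summable fun k : ℕ => q k * ∫ ω, (X k ω) ^ 2 ∂P)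
    (hS1 : Summable fun k : ℕ => Real.sqrt (q k) * |∫ ω, X k ω ∂P|)
    (S : Ω → ℝ) (hS : ∀ ω, S ω = ∑ k ∈ Finset.range (M ω), X k ω) :
    MemLp S 2 P ∧
      (∫ ω, (S ω) ^ 2 ∂P) - (∫ ω, S ω ∂P) ^ 2 ≤
        (∑' k : ℕ, q k * ∫ ω, (X k ω) ^ 2 ∂P) +
          (∑' k : ℕ, Real.sqrt (q k) * |∫ ω, X k ω ∂P|) ^ 2 := by
  obtain rfl : q = fun k => P.real {ω | k < M ω} := funext hq
  have hbound : ∀ N, ∫ ω, truncatedRouletteSum M X N ω ^ 2 ∂P ≤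
      (∑' k, P.real {ω | k < M ω} * ∫ ω, X k ω ^ 2 ∂P) +
        (∑' k, √(P.real {ω | k < M ω}) * |∫ ω, X k ω ∂P|) ^ 2 := fun N =>
    (integral_truncatedRouletteSum_sq_le hM hX2 (fun _ _ => hXindep.indepFun) hMindep N).trans
      (add_le_add (hS2.sum_le_tsum _ fun k _ => by positivity)
        (pow_le_pow_left₀ (by positivity) (hS1.sum_le_tsum _ fun k _ => by positivity) 2))
  have hlim : ∀ ω, Tendsto (truncatedRouletteSum M X · ω) atTop (𝓝 (S ω)) := fun ω =>
    tendsto_atTop_of_eventually_const fun N (hN : M ω ≤ N) =>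
      (truncatedRouletteSum_of_le hN).trans (hS ω).symm
  obtain ⟨hSmem, hSsq⟩ := memLp_two_and_integral_sq_le_of_tendsto
    (memLp_truncatedRouletteSum hM hX2) hbound (ae_of_all _ hlim)
  exact ⟨hSmem, by linarith [sq_nonneg (∫ ω, S ω ∂P)]⟩

/-- **Second-moment control for the Russian-roulette truncated estimator.** Let `(X k)_{k≥1}`
be a mutually independent family of square-integrable real random variables (here `X k : Ω → ℝ`
stands for the variable of index `k + 1`), and let `M : Ω → ℕ` take values in `{1,2,…}` and be
independent of the σ-algebra generated by the whole family. With `q k := P(M ≥ k + 1)` (the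
survival probability of index `k + 1`), if `∑_k q_k E[X_k²] < ∞` and `∑_k √(q_k) |E[X_k]| < ∞`,
then `S ω := ∑_{k=1}^{M ω} X_k ω` is square-integrable and
`Var(S) = E[S²] - (E[S])² ≤ ∑_k q_k E[X_k²] + (∑_k √(q_k) |E[X_k]|)²`. -/
theorem russian_roulette_second_moment
    {Ω : Type*} [MeasurableSpace Ω] (P : Measure Ω) [IsProbabilityMeasure P]
    (X : ℕ → Ω → ℝ) (hX2 : ∀ k, MemLp (X k) 2 P)
    (hXindep : iIndepFun X P)
    (M : Ω → ℕ) (hM : Measurable M) (hM1 : ∀ ω, 1 ≤ M ω)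
    (hMindep :
      Indep (MeasurableSpace.comap M inferInstance)
        (⨆ k, MeasurableSpace.comap (X k) inferInstance) P)
    (q : ℕ → ℝ) (hq : ∀ k, q k = (P {ω | k + 1 ≤ M ω}).toReal)
    (hS2 : Summable fun k : ℕ => q k * ∫ ω, (X k ω) ^ 2 ∂P)
    (hS1 : Summable fun k : ℕ => Real.sqrt (q k) * |∫ ω, X k ω ∂P|)
    (S : Ω → ℝ) (hS : ∀ ω, S ω = ∑ k ∈ Finset.range (M ω), X k ω) :
    MemLp S 2 P ∧
      (∫ ω, (S ω) ^ 2 ∂P) - (∫ ω, S ω ∂P) ^ 2 ≤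
        (∑' k : ℕ, q k * ∫ ω, (X k ω) ^ 2 ∂P) +
          (∑' k : ℕ, Real.sqrt (q k) * |∫ ω, X k ω ∂P|) ^ 2 :=
  russian_roulette_second_moment_general P X hX2 hXindep M hM hMindep q hq hS2 hS1 S hS
end

section
/- Let d ≥ 1, let f : ℝ^d → ℝ be L-Lipschitz with respect to the Euclidean norm, and let δ > 0. Define the ball-smoothed function f_δ(x) := E_{v}[f(x + δ v)], where v is uniformly distributed on the closed Euclidean unit ball of ℝ^d (i.e., f_δ(x) is the average of f(x + δ·) over the unit ball with respect to normalized Lebesgue measure). Then f_δ is differentiable at every point of ℝ^d. -/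
/-!
By Rademacher's theorem `f` is differentiable at `x + δ • v` for almost every `v`, and the
difference quotients of `x ↦ f (x + δ • v)` are bounded by the Lipschitz constant of `f`, so
dominated convergence lets us differentiate under the integral: the derivative of `f_δ` at `x`
is the average of `fderiv ℝ f (x + δ • v)`.
-/

open MeasureTheory ProbabilityTheory

section
variable {E : Type*} [NormedAddCommGroup E] [NormedSpace ℝ E] [FiniteDimensional ℝ E]
  [MeasurableSpace E] [BorelSpace E] {μ ν : Measure E} [μ.IsAddHaarMeasure]
  {f : E → ℝ} {K : NNReal} {δ : ℝ}

theorem LipschitzWith.ae_differentiableAt_add_smul (hf : LipschitzWith K f) (hδ : δ ≠ 0)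
    (hν : ν ≪ μ) (x : E) : ∀ᵐ v ∂ν, DifferentiableAt ℝ f (x + δ • v) :=
  hν.ae_le <| ((measurePreserving_add_left μ x).quasiMeasurePreserving.comp
    (Measure.quasiMeasurePreserving_smul μ hδ)).ae hf.ae_differentiableAt

theorem LipschitzWith.hasFDerivAt_integral_add_smul [IsFiniteMeasure ν] (hf : LipschitzWith K f)
    (hδ : δ ≠ 0) (hν : ν ≪ μ) {x : E} (hint : Integrable (fun v ↦ f (x + δ • v)) ν) :
    HasFDerivAt (fun y ↦ ∫ v, f (y + δ • v) ∂ν) (∫ v, fderiv ℝ f (x + δ • v) ∂ν) x := by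
  have hshift : Continuous fun v : E ↦ x + δ • v := by fun_prop
  refine (hasFDerivAt_integral_of_dominated_loc_of_lip (bound := fun _ ↦ (K : ℝ))
    Filter.univ_mem ?_ hint ?_ ?_ (integrable_const _) ?_).2
  · exact .of_forall fun y ↦ (hf.continuous.comp (by fun_prop)).aestronglyMeasurable
  · exact ((measurable_fderiv ℝ f).comp hshift.measurable).aestronglyMeasurable
  · exact .of_forall fun v ↦ by
      simpa [Function.comp_def] using hf.comp (isometry_add_right (δ • v)).lipschitz
  · filter_upwards [hf.ae_differentiableAt_add_smul hδ hν x] with v hv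
    exact hv.hasFDerivAt.comp x ((hasFDerivAt_id x).add_const (δ • v))

end

theorem ball_smoothing_differentiable_general
    (d : ℕ) (f : EuclideanSpace ℝ (Fin d) → ℝ) (L : ℝ)
    (hf : ∀ x y : EuclideanSpace ℝ (Fin d), |f x - f y| ≤ L * ‖x - y‖)
    (δ : ℝ) (hδ : 0 < δ)
    (μball : Measure (EuclideanSpace ℝ (Fin d)))
    (hμball : μball =
      (volume (Metric.closedBall (0 : EuclideanSpace ℝ (Fin d)) 1))⁻¹ •
        volume.restrict (Metric.closedBall (0 : EuclideanSpace ℝ (Fin d)) 1))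
    (fδ : EuclideanSpace ℝ (Fin d) → ℝ)
    (hfδ : ∀ x, fδ x = ∫ v, f (x + δ • v) ∂μball) :
    Differentiable ℝ fδ := by
  have hlip : LipschitzWith L.toNNReal f :=
    .of_dist_le' fun x y ↦ by rw [Real.dist_eq, dist_eq_norm]; exact hf x y
  have hball : volume (Metric.closedBall (0 : EuclideanSpace ℝ (Fin d)) 1) ≠ 0 :=
    (Metric.measure_closedBall_pos volume 0 one_pos).ne'
  replace hμball : μball = volume[|Metric.closedBall 0 1] := hμball
  subst hμball
  have hint (x) : Integrable (fun v ↦ f (x + δ • v)) volume[|Metric.closedBall 0 1] :=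
    ((hlip.continuous.comp (by fun_prop)).continuousOn.integrableOn_compact
      (isCompact_closedBall 0 1)).smul_measure (ENNReal.inv_ne_top.mpr hball)
  rw [show fδ = _ from funext hfδ]
  exact fun x ↦
    (hlip.hasFDerivAt_integral_add_smul hδ.ne' cond_absolutelyContinuous (hint x)).differentiableAt

/-- **Differentiability of the ball-smoothed function.** Let `f : ℝ^d → ℝ` be `L`-Lipschitz
and `δ > 0`. Define `f_δ(x) := E_v[f(x + δ v)]`, where `v` is uniform on the closed Euclidean
unit ball (normalized Lebesgue measure on the ball). Then `f_δ` is differentiable everywhere. -/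
theorem ball_smoothing_differentiable
    (d : ℕ) (hd : 1 ≤ d) (f : EuclideanSpace ℝ (Fin d) → ℝ) (L : ℝ)
    (hf : ∀ x y : EuclideanSpace ℝ (Fin d), |f x - f y| ≤ L * ‖x - y‖)
    (δ : ℝ) (hδ : 0 < δ)
    (μball : Measure (EuclideanSpace ℝ (Fin d)))
    (hμball : μball =
      (volume (Metric.closedBall (0 : EuclideanSpace ℝ (Fin d)) 1))⁻¹ •
        volume.restrict (Metric.closedBall (0 : EuclideanSpace ℝ (Fin d)) 1))
    (fδ : EuclideanSpace ℝ (Fin d) → ℝ)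
    (hfδ : ∀ x, fδ x = ∫ v, f (x + δ • v) ∂μball) :
    Differentiable ℝ fδ :=
  ball_smoothing_differentiable_general d f L hf δ hδ μball hμball fδ hfδ
end

section
/- Let d ≥ 1, let f : ℝ^d → ℝ be L-Lipschitz with respect to the Euclidean norm, and let δ > 0. Define the ball-smoothed function f_δ(x) := E_{v}[f(x + δ v)], where v is uniformly distributed on the closed Euclidean unit ball of ℝ^d. Then f_δ is differentiable and for every x ∈ ℝ^d its gradient satisfies ∇f_δ(x) = (d/(2δ)) · E_{u}[(f(x + δu) − f(x − δu)) u], where u is uniformly distributed on the Euclidean unit sphere S^{d−1} (equivalently, ∇f_δ(x) = (d/δ) · E_{u}[f(x + δu) u]). -/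
/-!
Write `f_δ(y) = ⨍_{B(0,1)} f(y + δ v) dv` and `g = f(x + δ ·)`. Translating the ball, the
increment `f_δ(x + h) - f_δ(x)` is the difference of the integrals of `g` over the unit balls
centred at `k = h / δ` and at `0`. In polar coordinates around `0`, the ray in direction `u`
leaves `B(k, 1)` at radius `R(k, u) = ⟪u, k⟫ + √(1 - ‖k‖² + ⟪u, k⟫²) = 1 + ⟪u, k⟫ + O(‖k‖²)`,
so this difference is `∫_S ∫_1^{R(k,u)} r^{n-1} g(r u) dr du = ∫_S g(u) ⟪u, k⟫ du + O(‖k‖²)`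
since `g` is Lipschitz. As the sphere has measure `n |B(0,1)|`, the gradient is
`(n / δ) ⨍_S f(x + δ u) u du`, and the antipodal symmetry of the surface measure turns this
into the two-point formula.
-/

open MeasureTheory Metric Set Asymptotics
open scoped RealInnerProductSpace Pointwise Topology NNReal

local notation "dim" => Module.finrank ℝ

lemma homeomorphUnitSphereProd_snd_smul_fst {E : Type*} [NormedAddCommGroup E] [NormedSpace ℝ E]
    (x : ({0}ᶜ : Set E)) :
    ((homeomorphUnitSphereProd E x).2 : ℝ) • ((homeomorphUnitSphereProd E x).1 : E) = x := by
  simp only [homeomorphUnitSphereProd_apply_fst_coe, homeomorphUnitSphereProd_apply_snd_coe]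
  exact smul_inv_smul₀ (norm_ne_zero_iff.2 x.2) _

section SphericalMeasure

variable {E F : Type*} [NormedAddCommGroup E] [NormedSpace ℝ E] [FiniteDimensional ℝ E]
  [MeasurableSpace E] [BorelSpace E] (μ : Measure E) [μ.IsAddHaarMeasure]
  [NormedAddCommGroup F]

lemma MeasureTheory.Integrable.comp_smul_toSphere_prod {G : E → F} (hG : Integrable G μ) :
    Integrable (fun p : sphere (0 : E) 1 × Ioi (0 : ℝ) => G (p.2.1 • p.1.1))
      (μ.toSphere.prod (.volumeIoiPow (dim E - 1))) := by
  rw [← μ.measurePreserving_homeomorphUnitSphereProd.integrable_comp_emb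
      (Homeomorph.measurableEmbedding _)]
  have : Integrable (G ∘ Subtype.val) (μ.comap ((↑) : ({0}ᶜ : Set E) → E)) := by
    rw [← (MeasurableEmbedding.subtype_coe (measurableSet_singleton _).compl).integrable_map_iff,
      map_comap_subtype_coe (measurableSet_singleton _).compl]
    exact hG.restrict
  exact this.congr (.of_forall fun x => congrArg G (homeomorphUnitSphereProd_snd_smul_fst x).symm)

variable [NormedSpace ℝ F]

lemma integral_volumeIoiPow (n : ℕ) (G : ℝ → F) :
    ∫ r, G r ∂(Measure.volumeIoiPow n) = ∫ r in Ioi (0 : ℝ), r ^ n • G r := by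
  simp only [Measure.volumeIoiPow, ENNReal.ofReal]
  rw [integral_withDensity_eq_integral_smul (measurable_subtype_coe.pow_const _).real_toNNReal,
    integral_subtype_comap measurableSet_Ioi fun r => (r ^ n).toNNReal • G r]
  refine setIntegral_congr_fun measurableSet_Ioi fun r (hr : 0 < r) => ?_
  rw [NNReal.smul_def, Real.coe_toNNReal _ (pow_nonneg hr.le _)]

lemma integral_comp_smul_toSphere_prod [Nontrivial E] (G : E → F) :
    ∫ p : sphere (0 : E) 1 × Ioi (0 : ℝ), G (p.2.1 • p.1.1)
      ∂(μ.toSphere.prod (.volumeIoiPow (dim E - 1))) = ∫ x, G x ∂μ := by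
  calc _ = ∫ x : ({0}ᶜ : Set E), G x ∂(μ.comap (↑)) := by
        rw [← μ.measurePreserving_homeomorphUnitSphereProd.integral_comp
          (Homeomorph.measurableEmbedding _)]
        simp only [homeomorphUnitSphereProd_snd_smul_fst]
    _ = ∫ x, G x ∂μ := by
        rw [integral_subtype_comap (measurableSet_singleton _).compl, restrict_compl_singleton]

theorem integral_eq_integral_toSphere_integral_Ioi [Nontrivial E] {G : E → F}
    (hG : Integrable G μ) :
    ∫ x, G x ∂μ = ∫ u : sphere (0 : E) 1,
      (∫ r in Ioi (0 : ℝ), r ^ (dim E - 1) • G (r • (u : E))) ∂μ.toSphere := by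
  rw [← integral_comp_smul_toSphere_prod, integral_prod _ (hG.comp_smul_toSphere_prod μ)]
  exact integral_congr_ae (.of_forall fun u => integral_volumeIoiPow _ fun r => G (r • (u : E)))

theorem MeasureTheory.Integrable.integral_Ioi_toSphere {G : E → F} (hG : Integrable G μ) :
    Integrable (fun u : sphere (0 : E) 1 =>
      ∫ r in Ioi (0 : ℝ), r ^ (dim E - 1) • G (r • (u : E))) μ.toSphere := by
  refine (hG.comp_smul_toSphere_prod μ).integral_prod_left.congr (.of_forall fun u => ?_)
  exact integral_volumeIoiPow _ fun r => G (r • (u : E))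

theorem MeasureTheory.Measure.measurePreserving_neg_toSphere :
    MeasurePreserving (Neg.neg : sphere (0 : E) 1 → sphere (0 : E) 1) μ.toSphere μ.toSphere := by
  refine ⟨continuous_neg.measurable, ?_⟩
  ext s hs
  have himage : ((↑) : sphere (0 : E) 1 → E) '' (Neg.neg ⁻¹' s) = -((↑) '' s) := by
    change ((↑) : sphere (0 : E) 1 → E) '' (-s) = _
    rw [← image_neg_eq_neg, ← image_neg_eq_neg, image_image, image_image]
    rfl
  rw [Measure.map_apply continuous_neg.measurable hs, Measure.toSphere_apply' _ hs,
    Measure.toSphere_apply' _ (continuous_neg.measurable hs), himage, Set.smul_neg,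
    Measure.measure_neg]

theorem average_toSphere_sub_comp_neg_smul {φ : E → ℝ} (hφ : Continuous φ) :
    ⨍ u : sphere (0 : E) 1, (φ u - φ (-u)) • (u : E) ∂μ.toSphere =
      (2 : ℝ) • ⨍ u : sphere (0 : E) 1, φ u • (u : E) ∂μ.toSphere := by
  have hint : ∀ ψ : E → ℝ, Continuous ψ →
      Integrable (fun u : sphere (0 : E) 1 => ψ u • (u : E)) μ.toSphere := fun ψ hψ =>
    (by fun_prop : Continuous _).integrable_of_hasCompactSupport (.of_compactSpace _)
  have hneg : ∫ u : sphere (0 : E) 1, φ (-u) • (u : E) ∂μ.toSphere =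
      -∫ u : sphere (0 : E) 1, φ u • (u : E) ∂μ.toSphere := by
    rw [← (μ.measurePreserving_neg_toSphere).integral_comp
      (Homeomorph.neg (sphere (0 : E) 1)).measurableEmbedding, ← integral_neg]
    simp
  simp only [average_eq, sub_smul]
  rw [integral_sub (hint φ hφ) (hint (fun v => φ (-v)) (by fun_prop)), hneg, sub_neg_eq_add,
    ← two_smul ℝ, smul_comm]

end SphericalMeasure

section Geometry

variable {E : Type*} [NormedAddCommGroup E] [InnerProductSpace ℝ E]

noncomputable def exitRadius (k u : E) : ℝ := ⟪u, k⟫ + √(1 - ‖k‖ ^ 2 + ⟪u, k⟫ ^ 2)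

@[simp] lemma exitRadius_zero (u : E) : exitRadius 0 u = 1 := by simp [exitRadius]

variable {k u : E}

lemma real_inner_sq_le_of_norm_eq_one (hu : ‖u‖ = 1) : ⟪u, k⟫ ^ 2 ≤ ‖k‖ ^ 2 := by
  have := abs_real_inner_le_norm u k
  rw [hu, one_mul] at this
  exact sq_le_sq' (abs_le.1 this).1 (abs_le.1 this).2

lemma abs_real_inner_le_sqrt (hk : ‖k‖ ≤ 1) : |⟪u, k⟫| ≤ √(1 - ‖k‖ ^ 2 + ⟪u, k⟫ ^ 2) :=
  Real.abs_le_sqrt <| by nlinarith [norm_nonneg k]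

lemma exitRadius_nonneg (hk : ‖k‖ ≤ 1) : 0 ≤ exitRadius k u := by
  unfold exitRadius
  linarith [neg_abs_le ⟪u, k⟫, abs_real_inner_le_sqrt (u := u) hk]

lemma smul_mem_closedBall_iff_le_exitRadius (hu : ‖u‖ = 1) (hk : ‖k‖ ≤ 1) {r : ℝ} (hr : 0 < r) :
    r • u ∈ closedBall k 1 ↔ r ≤ exitRadius k u := by
  have hs : 0 ≤ 1 - ‖k‖ ^ 2 + ⟪u, k⟫ ^ 2 := by nlinarith [norm_nonneg k]
  have hnorm : ‖r • u - k‖ ^ 2 = (r - ⟪u, k⟫) ^ 2 + ‖k‖ ^ 2 - ⟪u, k⟫ ^ 2 := by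
    rw [norm_sub_sq_real, real_inner_smul_left, norm_smul, hu, Real.norm_of_nonneg hr.le]
    ring
  have hlow := (le_abs_self ⟪u, k⟫).trans (abs_real_inner_le_sqrt (u := u) hk)
  rw [mem_closedBall_iff_norm, ← sq_le_one_iff₀ (norm_nonneg _), hnorm, exitRadius]
  constructor
  · intro h
    linarith [((Real.sq_le (x := r - ⟪u, k⟫) hs).1 (by linarith)).2]
  · intro h
    linarith [(Real.sq_le (x := r - ⟪u, k⟫) hs).2 ⟨by linarith, by linarith⟩]

lemma abs_exitRadius_sub_one_sub_inner_le (hu : ‖u‖ = 1) (hk : ‖k‖ ≤ 1) :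
    |exitRadius k u - 1 - ⟪u, k⟫| ≤ ‖k‖ ^ 2 := by
  have hs : 0 ≤ 1 - ‖k‖ ^ 2 + ⟪u, k⟫ ^ 2 := by nlinarith [norm_nonneg k]
  have hsq := Real.sq_sqrt hs
  have hnn := Real.sqrt_nonneg (1 - ‖k‖ ^ 2 + ⟪u, k⟫ ^ 2)
  have hin := real_inner_sq_le_of_norm_eq_one (k := k) hu
  -- `|√s - 1| ≤ |s - 1|` for `s ≥ 0`, and here `|s - 1| = ‖k‖² - ⟪u, k⟫²`.
  rw [exitRadius, abs_le]
  constructor <;> nlinarith [sq_nonneg ⟪u, k⟫]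

lemma Ioi_inter_preimage_smul_closedBall (hu : ‖u‖ = 1) (hk : ‖k‖ ≤ 1) :
    Ioi 0 ∩ (· • u) ⁻¹' closedBall k 1 = Ioc 0 (exitRadius k u) := by
  ext r
  simp only [mem_inter_iff, mem_Ioi, mem_preimage, mem_Ioc]
  exact and_congr_right fun hr => smul_mem_closedBall_iff_le_exitRadius hu hk hr

lemma setIntegral_Ioi_indicator_closedBall {F : Type*} [NormedAddCommGroup F] [NormedSpace ℝ F]
    (hu : ‖u‖ = 1) (hk : ‖k‖ ≤ 1) (m : ℕ) (g : E → F) :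
    ∫ r in Ioi (0 : ℝ), r ^ m • (closedBall k 1).indicator g (r • u) =
      ∫ r in 0..exitRadius k u, r ^ m • g (r • u) := by
  have : (fun r : ℝ => r ^ m • (closedBall k 1).indicator g (r • u)) =
      ((· • u) ⁻¹' closedBall k 1).indicator fun r => r ^ m • g (r • u) := by
    ext r
    by_cases h : r • u ∈ closedBall k 1 <;> simp [h]
  rw [this, setIntegral_indicator
      (isClosed_closedBall.preimage (continuous_id.smul continuous_const :
        Continuous (· • u))).measurableSet,
    Ioi_inter_preimage_smul_closedBall hu hk,
    intervalIntegral.integral_of_le (exitRadius_nonneg hk)]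

end Geometry

section BallIntegral

variable {E F : Type*} [NormedAddCommGroup E] [InnerProductSpace ℝ E] [FiniteDimensional ℝ E]
  [MeasurableSpace E] [BorelSpace E] (μ : Measure E) [μ.IsAddHaarMeasure]
  [NormedAddCommGroup F] [NormedSpace ℝ F] {k : E} {g : E → F}

theorem setIntegral_closedBall_eq_integral_toSphere [Nontrivial E] (hk : ‖k‖ ≤ 1)
    (hg : IntegrableOn g (closedBall k 1) μ) :
    ∫ v in closedBall k 1, g v ∂μ = ∫ u : sphere (0 : E) 1,
      (∫ r in 0..exitRadius k u, r ^ (dim E - 1) • g (r • (u : E))) ∂μ.toSphere := by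
  rw [← integral_indicator measurableSet_closedBall, integral_eq_integral_toSphere_integral_Ioi μ
    ((integrable_indicator_iff measurableSet_closedBall).2 hg)]
  exact integral_congr_ae (.of_forall fun u =>
    setIntegral_Ioi_indicator_closedBall (norm_eq_of_mem_sphere u) hk _ g)

theorem integrable_intervalIntegral_exitRadius (hk : ‖k‖ ≤ 1)
    (hg : IntegrableOn g (closedBall k 1) μ) :
    Integrable (fun u : sphere (0 : E) 1 =>
      ∫ r in 0..exitRadius k u, r ^ (dim E - 1) • g (r • (u : E))) μ.toSphere :=
  ((integrable_indicator_iff measurableSet_closedBall).2 hg).integral_Ioi_toSphere μ |>.congr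
    (.of_forall fun u => setIntegral_Ioi_indicator_closedBall (norm_eq_of_mem_sphere u) hk _ g)

end BallIntegral

lemma abs_intervalIntegral_sub_mul_le {ψ : ℝ → ℝ} {a b C : ℝ} (hC : 0 ≤ C)
    (hψ : IntervalIntegrable ψ volume a b) (h : ∀ r ∈ uIcc a b, |ψ r - ψ a| ≤ C * |r - a|) :
    |(∫ r in a..b, ψ r) - (b - a) * ψ a| ≤ C * (b - a) ^ 2 := by
  have hbound : ∀ r ∈ uIoc a b, ‖ψ r - ψ a‖ ≤ C * |b - a| := fun r hr =>
    (h r (uIoc_subset_uIcc hr)).trans <|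
      mul_le_mul_of_nonneg_left (abs_sub_left_of_mem_uIcc (uIoc_subset_uIcc hr)) hC
  calc |(∫ r in a..b, ψ r) - (b - a) * ψ a| = ‖∫ r in a..b, ψ r - ψ a‖ := by
        rw [intervalIntegral.integral_sub hψ intervalIntegrable_const,
          intervalIntegral.integral_const, smul_eq_mul, Real.norm_eq_abs]
    _ ≤ C * |b - a| * |b - a| := intervalIntegral.norm_integral_le_of_norm_le_const hbound
    _ = C * (b - a) ^ 2 := by rw [mul_assoc, abs_mul_abs_self, sq]

lemma LipschitzWith.abs_le_abs_add_mul_norm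
    {E : Type*} [SeminormedAddCommGroup E] {g : E → ℝ} {K : ℝ≥0}
    (hg : LipschitzWith K g) (v : E) :
    |g v| ≤ |g 0| + K * ‖v‖ := by
  have := hg.dist_le_mul v 0
  rw [Real.dist_eq, dist_zero_right] at this
  linarith [abs_sub_abs_le_abs_sub (g v) (g 0)]

section RadialEstimates

variable {E : Type*} [NormedAddCommGroup E] [InnerProductSpace ℝ E] {g : E → ℝ} {K : ℝ≥0}

lemma exists_abs_pow_mul_comp_smul_sub_le (hg : LipschitzWith K g) (m : ℕ) :
    ∃ C, 0 ≤ C ∧ ∀ u : E, ‖u‖ = 1 → ∀ r : ℝ, |r - 1| ≤ 1 →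
      |r ^ m * g (r • u) - g u| ≤ C * |r - 1| := by
  refine ⟨m * 2 ^ m * (|g 0| + 2 * K) + K, by positivity, fun u hu r hr => ?_⟩
  have hr2 : |r| ≤ 2 := by
    have := abs_sub_abs_le_abs_sub r 1
    rw [abs_one] at this
    linarith
  have hpow : |r ^ m - 1| ≤ m * 2 ^ m * |r - 1| := by
    have := abs_pow_sub_pow_le r 1 m
    rw [one_pow, abs_one] at this
    have hmax : max |r| 1 ^ (m - 1) ≤ 2 ^ m :=
      (pow_le_pow_left₀ (by positivity) (max_le hr2 one_le_two) _).trans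
        (pow_le_pow_right₀ one_le_two (Nat.sub_le m 1))
    calc |r ^ m - 1| ≤ |r - 1| * m * max |r| 1 ^ (m - 1) := this
      _ ≤ |r - 1| * m * 2 ^ m := by gcongr
      _ = m * 2 ^ m * |r - 1| := by ring
  have hbound : |g (r • u)| ≤ |g 0| + 2 * K := by
    have := hg.abs_le_abs_add_mul_norm (r • u)
    rw [norm_smul, hu, mul_one, Real.norm_eq_abs] at this
    linarith [mul_le_mul_of_nonneg_left hr2 K.coe_nonneg]
  have hlip : |g (r • u) - g u| ≤ K * |r - 1| := by
    have := hg.dist_le_mul (r • u) u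
    rwa [Real.dist_eq, dist_eq_norm, show r • u - u = (r - 1) • u by rw [sub_smul, one_smul],
      norm_smul, hu, mul_one, Real.norm_eq_abs] at this
  calc |r ^ m * g (r • u) - g u| = |(r ^ m - 1) * g (r • u) + (g (r • u) - g u)| := by ring_nf
    _ ≤ |r ^ m - 1| * |g (r • u)| + |g (r • u) - g u| := by
        rw [← abs_mul]; exact abs_add_le _ _
    _ ≤ m * 2 ^ m * |r - 1| * (|g 0| + 2 * K) + K * |r - 1| := by gcongr
    _ = (m * 2 ^ m * (|g 0| + 2 * K) + K) * |r - 1| := by ring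

lemma exists_abs_intervalIntegral_exitRadius_sub_le (hg : LipschitzWith K g) (m : ℕ) :
    ∃ C, ∀ k : E, ‖k‖ ≤ 1 / 2 → ∀ u : E, ‖u‖ = 1 →
      |(∫ r in 1..exitRadius k u, r ^ m * g (r • u)) - g u * ⟪u, k⟫| ≤ C * ‖k‖ ^ 2 := by
  obtain ⟨C, hC, hψ⟩ := exists_abs_pow_mul_comp_smul_sub_le hg m
  refine ⟨4 * C + (|g 0| + K), fun k hk u hu => ?_⟩
  set R := exitRadius k u
  have hR : |R - 1 - ⟪u, k⟫| ≤ ‖k‖ ^ 2 := abs_exitRadius_sub_one_sub_inner_le hu (by linarith)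
  have hR1 : |R - 1| ≤ 2 * ‖k‖ := by
    have hin : |⟪u, k⟫| ≤ ‖k‖ := by simpa [hu] using abs_real_inner_le_norm u k
    have := abs_sub_abs_le_abs_sub (R - 1) ⟪u, k⟫
    nlinarith [norm_nonneg k]
  have hgu : |g u| ≤ |g 0| + K := by simpa [hu] using hg.abs_le_abs_add_mul_norm u
  have hcont : Continuous fun r : ℝ => r ^ m * g (r • u) := by
    have := hg.continuous; fun_prop
  have hmain := abs_intervalIntegral_sub_mul_le hC (hcont.intervalIntegrable 1 R) fun r hr => by
    simpa using hψ u hu r ((abs_sub_left_of_mem_uIcc hr).trans (by linarith))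
  simp only [one_pow, one_smul, one_mul] at hmain
  calc |(∫ r in 1..R, r ^ m * g (r • u)) - g u * ⟪u, k⟫|
        = |((∫ r in 1..R, r ^ m * g (r • u)) - (R - 1) * g u) + (R - 1 - ⟪u, k⟫) * g u| := by
          ring_nf
    _ ≤ C * (R - 1) ^ 2 + ‖k‖ ^ 2 * (|g 0| + K) := by
        refine (abs_add_le _ _).trans (add_le_add hmain ?_)
        rw [abs_mul]
        exact mul_le_mul hR hgu (abs_nonneg _) (by positivity)
    _ ≤ C * (2 * ‖k‖) ^ 2 + ‖k‖ ^ 2 * (|g 0| + K) := by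
        rw [← sq_abs (R - 1)]
        gcongr
    _ = (4 * C + (|g 0| + K)) * ‖k‖ ^ 2 := by ring

end RadialEstimates

section Gradient

variable {E : Type*} [NormedAddCommGroup E] [InnerProductSpace ℝ E] [FiniteDimensional ℝ E]
  [MeasurableSpace E] [BorelSpace E] [Nontrivial E] (μ : Measure E) [μ.IsAddHaarMeasure]
  {K : ℝ≥0}

theorem isBigO_setIntegral_closedBall_sub {g : E → ℝ} (hg : LipschitzWith K g) :
    (fun k : E => (∫ v in closedBall k 1, g v ∂μ) - (∫ v in closedBall 0 1, g v ∂μ) -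
      ∫ u : sphere (0 : E) 1, g u * ⟪(u : E), k⟫ ∂μ.toSphere) =O[𝓝 0] fun k => ‖k‖ ^ 2 := by
  obtain ⟨C, hC⟩ := exists_abs_intervalIntegral_exitRadius_sub_le hg (dim E - 1)
  have hint : ∀ k : E, IntegrableOn g (closedBall k 1) μ := fun k =>
    hg.continuous.continuousOn.integrableOn_compact (isCompact_closedBall _ _)
  have hT : ∀ k : E, Integrable (fun u : sphere (0 : E) 1 => g u * ⟪(u : E), k⟫) μ.toSphere :=
    fun k => by
      have := hg.continuous
      exact (by fun_prop : Continuous _).integrable_of_hasCompactSupport (.of_compactSpace _)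
  refine IsBigO.of_bound (C * μ.toSphere.real univ) ?_
  filter_upwards [closedBall_mem_nhds (0 : E) one_half_pos] with k hk
  rw [mem_closedBall_zero_iff] at hk
  have hk1 : ‖k‖ ≤ 1 := hk.trans (by norm_num)
  set Φ : E → sphere (0 : E) 1 → ℝ := fun k u =>
    ∫ r in 0..exitRadius k u, r ^ (dim E - 1) • g (r • (u : E))
  have hΦk : Integrable (Φ k) μ.toSphere := integrable_intervalIntegral_exitRadius μ hk1 (hint k)
  have hΦ0 : Integrable (Φ 0) μ.toSphere :=
    integrable_intervalIntegral_exitRadius μ (by simp) (hint 0)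
  rw [setIntegral_closedBall_eq_integral_toSphere μ hk1 (hint k),
    setIntegral_closedBall_eq_integral_toSphere μ (by simp) (hint 0), ← integral_sub hΦk hΦ0,
    ← integral_sub (f := fun u => Φ k u - Φ 0 u) (hΦk.sub hΦ0) (hT k), norm_pow, norm_norm,
    mul_right_comm]
  refine norm_integral_le_of_norm_le_const (.of_forall fun u => ?_)
  have hψ : Continuous fun r : ℝ => r ^ (dim E - 1) • g (r • (u : E)) := by
    have := hg.continuous; fun_prop
  simp only [Φ, exitRadius_zero]
  rw [intervalIntegral.integral_interval_sub_left (hψ.intervalIntegrable _ _)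
    (hψ.intervalIntegrable _ _)]
  exact hC k hk u (norm_eq_of_mem_sphere u)

theorem hasGradientAt_setIntegral_closedBall_add {f : E → ℝ} (hf : LipschitzWith K f) (x : E) :
    HasGradientAt (fun y => ∫ v in closedBall (0 : E) 1, f (y + v) ∂μ)
      (∫ u : sphere (0 : E) 1, f (x + u) • (u : E) ∂μ.toSphere) x := by
  have htrans : ∀ h : E,
      ∫ v in closedBall (0 : E) 1, f (x + h + v) ∂μ = ∫ v in closedBall h 1, f (x + v) ∂μ := by
    intro h
    have := (measurePreserving_add_left μ h).setIntegral_preimage_emb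
      (measurableEmbedding_addLeft h) (fun v => f (x + v)) (closedBall h 1)
    rw [preimage_add_closedBall, sub_self] at this
    simpa only [add_assoc] using this
  have hinner : ∀ h : E, ⟪∫ u : sphere (0 : E) 1, f (x + u) • (u : E) ∂μ.toSphere, h⟫ =
      ∫ u : sphere (0 : E) 1, f (x + u) * ⟪(u : E), h⟫ ∂μ.toSphere := by
    intro h
    have := hf.continuous
    rw [real_inner_comm, ← integral_inner ((by fun_prop : Continuous fun u : sphere (0 : E) 1 =>
      f (x + u) • (u : E)).integrable_of_hasCompactSupport (.of_compactSpace _))]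
    simp only [real_inner_smul_right, real_inner_comm]
  rw [hasGradientAt_iff_hasFDerivAt, hasFDerivAt_iff_isLittleO_nhds_zero]
  refine IsBigO.trans_isLittleO ?_ (isLittleO_norm_pow_id one_lt_two)
  simp only [InnerProductSpace.toDual_apply_apply, hinner, htrans]
  simpa using isBigO_setIntegral_closedBall_sub μ (hf.comp (isometry_add_left x).lipschitz)

theorem hasGradientAt_setAverage_closedBall {f : E → ℝ} (hf : LipschitzWith K f) {δ : ℝ}
    (hδ : 0 < δ) (x : E) :
    HasGradientAt (fun y => ⨍ v in closedBall (0 : E) 1, f (y + δ • v) ∂μ)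
      ((dim E / δ) • ⨍ u : sphere (0 : E) 1, f (x + δ • (u : E)) • (u : E) ∂μ.toSphere) x := by
  -- `f (y + δ • v) = f' (δ⁻¹ • y + v)` for `f' = f (δ • ·)`.
  have h1 := hasGradientAt_setIntegral_closedBall_add μ (hf.comp (lipschitzWith_smul δ)) (δ⁻¹ • x)
  rw [hasGradientAt_iff_hasFDerivAt] at h1 ⊢
  have h2 := (h1.comp x ((hasFDerivAt_id x).const_smul δ⁻¹)).const_mul
    (μ.real (closedBall (0 : E) 1))⁻¹
  have hσ : μ.toSphere.real univ = dim E * μ.real (closedBall (0 : E) 1) := by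
    rw [Measure.toSphere_real_apply_univ, Measure.addHaar_real_closedBall_eq_addHaar_real_ball]
  have hn : (dim E : ℝ) ≠ 0 := Nat.cast_ne_zero.2 Module.finrank_pos.ne'
  refine (h2.congr_fderiv ?_).congr_of_eventuallyEq (.of_forall fun y => ?_)
  · ext h
    simp only [average_eq, hσ, smul_smul, InnerProductSpace.toDual_apply_apply,
      smul_apply, ContinuousLinearMap.comp_apply, real_inner_smul_left,
      real_inner_smul_right, ContinuousLinearMap.id_apply, Function.comp_apply, smul_eq_mul,
      smul_inv_smul₀ hδ.ne', smul_add]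
    field_simp
  · simp [setAverage_eq, smul_add, smul_smul, hδ.ne']

end Gradient

/-- **Two-point sphere formula for the gradient of the ball-smoothed function.** Let
`f : ℝ^d → ℝ` be `L`-Lipschitz and `δ > 0`, and let `f_δ(x) := E_v[f(x + δ v)]` with `v`
uniform on the closed unit ball. Then `f_δ` is differentiable and, for every `x`,
`∇f_δ(x) = (d/(2δ)) E_u[(f(x + δu) - f(x - δu)) u]`, where `u` is uniform on the unit
sphere (the normalized surface/rotation-invariant probability measure). -/
theorem ball_smoothing_gradient_two_point
    (d : ℕ) (hd : 1 ≤ d) (f : EuclideanSpace ℝ (Fin d) → ℝ) (L : ℝ)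
    (hf : ∀ x y : EuclideanSpace ℝ (Fin d), |f x - f y| ≤ L * ‖x - y‖)
    (δ : ℝ) (hδ : 0 < δ)
    (μball : Measure (EuclideanSpace ℝ (Fin d)))
    (hμball : μball =
      (volume (Metric.closedBall (0 : EuclideanSpace ℝ (Fin d)) 1))⁻¹ •
        volume.restrict (Metric.closedBall (0 : EuclideanSpace ℝ (Fin d)) 1))
    (μsphere : Measure (Metric.sphere (0 : EuclideanSpace ℝ (Fin d)) 1))
    (hμsphere : μsphere =
      ((volume : Measure (EuclideanSpace ℝ (Fin d))).toSphere Set.univ)⁻¹ •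
        (volume : Measure (EuclideanSpace ℝ (Fin d))).toSphere)
    (fδ : EuclideanSpace ℝ (Fin d) → ℝ)
    (hfδ : ∀ x, fδ x = ∫ v, f (x + δ • v) ∂μball) :
    Differentiable ℝ fδ ∧
      ∀ x : EuclideanSpace ℝ (Fin d),
        gradient fδ x =
          ((d : ℝ) / (2 * δ)) •
            ∫ u : Metric.sphere (0 : EuclideanSpace ℝ (Fin d)) 1,
              (f (x + δ • (u : EuclideanSpace ℝ (Fin d))) -
                  f (x - δ • (u : EuclideanSpace ℝ (Fin d)))) •
                (u : EuclideanSpace ℝ (Fin d)) ∂μsphere := by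
  have : Nontrivial (EuclideanSpace ℝ (Fin d)) :=
    Module.nontrivial_of_finrank_pos (by rw [finrank_euclideanSpace_fin]; omega)
  have hlip : LipschitzWith L.toNNReal f := .of_dist_le_mul fun x y => by
    rw [Real.dist_eq, dist_eq_norm]
    exact (hf x y).trans (by gcongr; exact Real.le_coe_toNNReal L)
  have hfδ_avg : fδ = fun y => ⨍ v in closedBall 0 1, f (y + δ • v) := by
    funext y
    rw [hfδ, hμball, setAverage_eq']
  have hgrad := hfδ_avg ▸ hasGradientAt_setAverage_closedBall volume hlip hδ
  refine ⟨fun x => (hgrad x).differentiableAt, fun x => ?_⟩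
  have hneg : ∀ u : EuclideanSpace ℝ (Fin d), x - δ • u = x + δ • -u := fun u => by
    rw [smul_neg, sub_eq_add_neg]
  have hcont := hlip.continuous
  simp_rw [(hgrad x).gradient, hμsphere, ← average_eq', hneg]
  rw [average_toSphere_sub_comp_neg_smul volume (φ := fun v => f (x + δ • v)) (by fun_prop),
    finrank_euclideanSpace_fin, smul_smul]
  congr 1
  field_simp
end
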